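/- arXiv:1905.09704 — 5 statements merged into one kernel-verified Lean document; each statement's English description precedes it below -/
import Mathlib

section
/- Let P and Q be probability distributions on a finite set {1,...,n} with total variation distance at most 1/4. If x is drawn from P and y is drawn from Q independently, then Pr[x = y] ≥ 1/(2n). -/
open Finset

theorem stmt_0 (n : ℕ) (hn : 0 < n) (P Q : Fin n → ℝ)
    (hP0 : ∀ i, 0 ≤ P i) (hQ0 : ∀ i, 0 ≤ Q i)
    (hP1 : ∑ i, P i = 1) (hQ1 : ∑ i, Q i = 1)
    (hTV : (1 / 2) * ∑ i, |P i - Q i| ≤ 1 / 4) :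
    1 / (2 * n) ≤ ∑ i, P i * Q i := by
  set m : Fin n → ℝ := fun i => min (P i) (Q i) with hm
  have key : ∀ i, m i = (P i + Q i - |P i - Q i|) / 2 := by
    intro i
    rcases le_total (P i) (Q i) with h | h
    · have ha : |P i - Q i| = Q i - P i := by
        rw [abs_sub_comm]; exact abs_of_nonneg (by linarith)
      simp only [hm, min_eq_left h, ha]; ring
    · have ha : |P i - Q i| = P i - Q i := abs_of_nonneg (by linarith)
      simp only [hm, min_eq_right h, ha]; ring
  have hmsum : (3 : ℝ) / 4 ≤ ∑ i, m i := by
    have h1 : ∑ i, m i = (∑ i, (P i + Q i) - ∑ i, |P i - Q i|) / 2 := by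
      calc ∑ i, m i = ∑ i, (P i + Q i - |P i - Q i|) / 2 :=
            Finset.sum_congr rfl fun i _ => key i
        _ = (∑ i, (P i + Q i - |P i - Q i|)) / 2 := by rw [Finset.sum_div]
        _ = (∑ i, (P i + Q i) - ∑ i, |P i - Q i|) / 2 := by rw [Finset.sum_sub_distrib]
    rw [Finset.sum_add_distrib, hP1, hQ1] at h1
    rw [h1]; linarith
  have hCS : (∑ i, m i) ^ 2 ≤ (n : ℝ) * ∑ i, m i ^ 2 := by
    have := sq_sum_le_card_mul_sum_sq (s := Finset.univ) (f := m)
    simpa using this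
  have hsq : ∑ i, m i ^ 2 ≤ ∑ i, P i * Q i := by
    apply Finset.sum_le_sum
    intro i _
    have h1 : 0 ≤ m i := le_min (hP0 i) (hQ0 i)
    have h2 : m i ≤ P i := min_le_left _ _
    have h3 : m i ≤ Q i := min_le_right _ _
    calc m i ^ 2 = m i * m i := sq (m i)
      _ ≤ P i * Q i := mul_le_mul h2 h3 h1 (hP0 i)
  have hn' : (0 : ℝ) < n := by exact_mod_cast hn
  have h9 : (9 : ℝ) / 16 ≤ (n : ℝ) * ∑ i, P i * Q i := by
    calc (9 : ℝ) / 16 = (3 / 4 : ℝ) ^ 2 := by norm_num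
      _ ≤ (∑ i, m i) ^ 2 := by
          apply pow_le_pow_left₀ (by norm_num) hmsum
      _ ≤ (n : ℝ) * ∑ i, m i ^ 2 := hCS
      _ ≤ (n : ℝ) * ∑ i, P i * Q i := by
          exact mul_le_mul_of_nonneg_left hsq (le_of_lt hn')
  rw [div_le_iff₀ (by positivity)]
  nlinarith [h9]
end

section
/- Let P and Q be probability distributions on {1,...,n} with TV(P,Q) ≤ 1/4, and let S ⊆ {1,...,n} satisfy Q(S) ≥ 1/2. If x ∼ P and y ∼ Q are independent, then Pr[∃ i ∈ S, x = y = i] ≥ 1/(16n). -/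
open Finset

theorem stmt_2 (n : ℕ) (hn : 0 < n) (P Q : Fin n → ℝ)
    (hP0 : ∀ i, 0 ≤ P i) (hQ0 : ∀ i, 0 ≤ Q i)
    (hP1 : ∑ i, P i = 1) (hQ1 : ∑ i, Q i = 1)
    (hTV : (1 / 2) * ∑ i, |P i - Q i| ≤ 1 / 4)
    (S : Finset (Fin n)) (hS : (1 : ℝ) / 2 ≤ ∑ i ∈ S, Q i) :
    1 / (16 * n) ≤ ∑ i ∈ S, P i * Q i := by
  set m : Fin n → ℝ := fun i => min (P i) (Q i) with hm
  have hm0 : ∀ i, 0 ≤ m i := fun i => le_min (hP0 i) (hQ0 i)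
  -- sum of positive parts equals half the L1 distance
  have hsum0 : ∑ i, (Q i - P i) = 0 := by
    rw [Finset.sum_sub_distrib, hP1, hQ1]; ring
  have key : ∑ i, max (Q i - P i) 0 = (1 / 2) * ∑ i, |P i - Q i| := by
    have e : ∀ i ∈ (univ : Finset (Fin n)),
        max (Q i - P i) 0 = (|P i - Q i| + (Q i - P i)) / 2 := by
      intro i _
      rcases le_total (P i) (Q i) with h | h
      · rw [max_eq_left (by linarith), abs_of_nonpos (by linarith)]; ring
      · rw [max_eq_right (by linarith), abs_of_nonneg (by linarith)]; ring
    rw [Finset.sum_congr rfl e, ← Finset.sum_div, Finset.sum_add_distrib, hsum0]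
    ring
  -- lower bound on sum of min over S
  have hmin : (1 : ℝ) / 4 ≤ ∑ i ∈ S, m i := by
    have h1 : ∑ i ∈ S, (Q i - m i) ≤ (1 / 2) * ∑ i, |P i - Q i| := by
      have e : ∀ i ∈ S, Q i - m i = max (Q i - P i) 0 := by
        intro i _
        rcases le_total (P i) (Q i) with h | h
        · rw [hm]; simp [min_eq_left h, max_eq_left (by linarith : (0:ℝ) ≤ Q i - P i)]
        · rw [hm]; simp [min_eq_right h, max_eq_right (by linarith : Q i - P i ≤ (0:ℝ))]
      rw [Finset.sum_congr rfl e, ← key]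
      exact Finset.sum_le_sum_of_subset_of_nonneg (Finset.subset_univ S)
        (fun i _ _ => le_max_right _ _)
    have h2 : ∑ i ∈ S, (Q i - m i) = (∑ i ∈ S, Q i) - ∑ i ∈ S, m i := by
      rw [Finset.sum_sub_distrib]
    linarith
  -- Cauchy-Schwarz
  have hcs : (∑ i ∈ S, m i) ^ 2 ≤ (S.card : ℝ) * ∑ i ∈ S, (m i) ^ 2 := by
    exact sq_sum_le_card_mul_sum_sq
  have hsq : ∑ i ∈ S, (m i) ^ 2 ≤ ∑ i ∈ S, P i * Q i := by
    apply Finset.sum_le_sum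
    intro i _
    have := hm0 i
    calc (m i) ^ 2 = m i * m i := sq (m i) ▸ rfl
      _ ≤ P i * Q i := mul_le_mul (min_le_left _ _) (min_le_right _ _) this (hP0 i)
  have hcard : (S.card : ℝ) ≤ (n : ℝ) := by
    exact_mod_cast Finset.card_le_card (Finset.subset_univ S) |>.trans (by simp)
  have hn' : (0 : ℝ) < n := by exact_mod_cast hn
  have h16 : (1 : ℝ) / 16 ≤ (n : ℝ) * ∑ i ∈ S, P i * Q i := by
    have hPQnn : (0 : ℝ) ≤ ∑ i ∈ S, (m i) ^ 2 :=
      Finset.sum_nonneg fun i _ => sq_nonneg _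
    nlinarith [sq_nonneg (∑ i ∈ S, m i)]
  rw [div_le_iff₀ (by positivity)]
  nlinarith
end

section
/- Suppose m balls (2 ≤ m ≤ n) are thrown independently into n bins, where ball j lands in bin i with probability P_j(i), and each P_j satisfies TV(P_j, μ) ≤ 1/8 for a common distribution μ. Then the expected number of nonempty bins is at most m − m²/(256n). -/
open Finset

/-- Quadratic upper bound: `∏ (1 - xⱼ) ≤ 1 - T + T²/2` for `xⱼ ∈ [0,1]`, `T = ∑ xⱼ`. -/
private lemma quad_bound {ι : Type*} (s : Finset ι) (x : ι → ℝ)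
    (h0 : ∀ j ∈ s, 0 ≤ x j) (h1 : ∀ j ∈ s, x j ≤ 1) :
    ∏ j ∈ s, (1 - x j) ≤ 1 - (∑ j ∈ s, x j) + (∑ j ∈ s, x j) ^ 2 / 2 := by
  induction s using Finset.cons_induction with
  | empty => simp
  | cons a s ha ih =>
    have h0a := h0 a (mem_cons_self a s)
    have h1a := h1 a (mem_cons_self a s)
    have ih' := ih (fun j hj => h0 j (mem_cons_of_mem hj))
      (fun j hj => h1 j (mem_cons_of_mem hj))
    have hs0 : (0:ℝ) ≤ ∑ j ∈ s, x j := sum_nonneg fun j hj => h0 j (mem_cons_of_mem hj)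
    have hxa : (0:ℝ) ≤ 1 - x a := by linarith
    have key := mul_le_mul_of_nonneg_left ih' hxa
    rw [prod_cons, sum_cons]
    nlinarith [mul_nonneg h0a (sq_nonneg (∑ j ∈ s, x j)), mul_nonneg h0a h0a]

/-- Weierstrass inequality: `1 - ∑ xⱼ ≤ ∏ (1 - xⱼ)` for `xⱼ ∈ [0,1]`. -/
private lemma weier {ι : Type*} (s : Finset ι) (x : ι → ℝ)
    (h0 : ∀ j ∈ s, 0 ≤ x j) (h1 : ∀ j ∈ s, x j ≤ 1) :
    1 - (∑ j ∈ s, x j) ≤ ∏ j ∈ s, (1 - x j) := by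
  induction s using Finset.cons_induction with
  | empty => simp
  | cons a s ha ih =>
    have h0a := h0 a (mem_cons_self a s)
    have h1a := h1 a (mem_cons_self a s)
    have ih' := ih (fun j hj => h0 j (mem_cons_of_mem hj))
      (fun j hj => h1 j (mem_cons_of_mem hj))
    have hs0 : (0:ℝ) ≤ ∑ j ∈ s, x j := sum_nonneg fun j hj => h0 j (mem_cons_of_mem hj)
    have hxa : (0:ℝ) ≤ 1 - x a := by linarith
    have key := mul_le_mul_of_nonneg_left ih' hxa
    rw [prod_cons, sum_cons]
    nlinarith [mul_nonneg h0a hs0]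

set_option maxHeartbeats 1000000 in
/-- The expected number of nonempty bins when `m` balls are thrown independently
into `n` bins (ball `j` landing in bin `i` with probability `P j i`) is
`∑ i, (1 - ∏ j, (1 - P j i))`.  If each `P j` is within total variation
distance `1/8` of a common distribution `μ`, this expectation is at most
`m - m² / (256 n)`. -/
theorem stmt_8 (n m : ℕ) (hm2 : 2 ≤ m) (hmn : m ≤ n)
    (P : Fin m → Fin n → ℝ) (μ : Fin n → ℝ)
    (hP0 : ∀ j i, 0 ≤ P j i) (hP1 : ∀ j, ∑ i, P j i = 1)
    (hμ0 : ∀ i, 0 ≤ μ i) (hμ1 : ∑ i, μ i = 1)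
    (hTV : ∀ j, (1 / 2) * ∑ i, |P j i - μ i| ≤ 1 / 8) :
    ∑ i, (1 - ∏ j, (1 - P j i)) ≤ m - m ^ 2 / (256 * n) := by
  classical
  have hn2 : 2 ≤ n := le_trans hm2 hmn
  have hnR : (0:ℝ) < n := by
    have : 0 < n := by omega
    exact_mod_cast this
  have hmR : (2:ℝ) ≤ m := by exact_mod_cast hm2
  have hmnR : (m:ℝ) ≤ n := by exact_mod_cast hmn
  have hP1' : ∀ j i, P j i ≤ 1 := by
    intro j i
    have := Finset.single_le_sum (f := fun i => P j i) (fun i _ => hP0 j i) (mem_univ i)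
    rw [hP1 j] at this; exact this
  have hμ1' : ∀ i, μ i ≤ 1 := by
    intro i
    have := Finset.single_le_sum (f := μ) (fun i _ => hμ0 i) (mem_univ i)
    rw [hμ1] at this; exact this
  set ν : Fin m → Fin n → ℝ := fun j i => min (P j i) (μ i) with hν_def
  have hν0 : ∀ j i, 0 ≤ ν j i := fun j i => le_min (hP0 j i) (hμ0 i)
  have hνP : ∀ j i, ν j i ≤ P j i := fun j i => min_le_left _ _
  have hνμ : ∀ j i, ν j i ≤ μ i := fun j i => min_le_right _ _
  have hν1 : ∀ j i, ν j i ≤ 1 := fun j i => le_trans (hνμ j i) (hμ1' i)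
  -- total variation control of the defect
  have hd : ∀ j, ∑ i, (μ i - ν j i) ≤ 1/8 := by
    intro j
    have hpt : ∀ i, μ i - ν j i = (|P j i - μ i| + (μ i - P j i))/2 := by
      intro i
      simp only [hν_def]
      rcases le_total (P j i) (μ i) with h | h
      · rw [min_eq_left h, abs_of_nonpos (by linarith : P j i - μ i ≤ 0)]; ring
      · rw [min_eq_right h, abs_of_nonneg (by linarith : 0 ≤ P j i - μ i)]; ring
    calc ∑ i, (μ i - ν j i) = ∑ i, (|P j i - μ i| + (μ i - P j i))/2 :=
          Finset.sum_congr rfl fun i _ => hpt i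
      _ = ((∑ i, |P j i - μ i|) + ((∑ i, μ i) - ∑ i, P j i))/2 := by
          rw [← Finset.sum_div, Finset.sum_add_distrib, Finset.sum_sub_distrib]
      _ ≤ 1/8 := by rw [hμ1, hP1 j]; have := hTV j; linarith
  have hdsub : ∀ (T : Finset (Fin n)) (j : Fin m), ∑ i ∈ T, (μ i - ν j i) ≤ 1/8 := by
    intro T j
    calc ∑ i ∈ T, (μ i - ν j i)
        ≤ ∑ i, (μ i - ν j i) :=
          Finset.sum_le_sum_of_subset_of_nonneg (subset_univ T)
            (fun i _ _ => by have := hνμ j i; linarith)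
      _ ≤ 1/8 := hd j
  -- the half split
  set a : ℕ := (m+1)/2 with ha_def
  have ha1 : 1 ≤ a := by omega
  have ham : a ≤ m := by omega
  have haR : (1:ℝ) ≤ a := by exact_mod_cast ha1
  have haP : (0:ℝ) < a := by linarith
  obtain ⟨A, -, hA⟩ := Finset.exists_subset_card_eq
    (show a ≤ (univ : Finset (Fin m)).card by simpa using ham)
  have hBcard : Aᶜ.card = m - a := by
    rw [Finset.card_compl, hA]; simp
  set S : Fin n → ℝ := fun i => ∑ j ∈ A, ν j i with hS_def
  set D : Fin n → ℝ := fun i => ∑ j ∈ A, (μ i - ν j i) with hD_def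
  have hS0 : ∀ i, 0 ≤ S i := fun i => sum_nonneg fun j _ => hν0 j i
  have hD0 : ∀ i, 0 ≤ D i := fun i => sum_nonneg fun j _ => by have := hνμ j i; linarith
  have hSD : ∀ i, S i = a * μ i - D i := by
    intro i
    simp only [hS_def, hD_def, Finset.sum_sub_distrib, Finset.sum_const, hA, nsmul_eq_mul]
    ring
  have hSle : ∀ i, S i ≤ a * μ i := by
    intro i
    have := hD0 i
    rw [hSD i]; linarith
  have hDsum : ∑ i, D i ≤ (a:ℝ)/8 := by
    simp only [hD_def]
    rw [Finset.sum_comm]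
    calc ∑ j ∈ A, ∑ i, (μ i - ν j i) ≤ ∑ j ∈ A, (1:ℝ)/8 :=
          Finset.sum_le_sum fun j _ => hd j
      _ = a/8 := by rw [Finset.sum_const, hA, nsmul_eq_mul]; ring
  -- product facts
  have hprod0 : ∀ (T : Finset (Fin m)) i, 0 ≤ ∏ j ∈ T, (1 - P j i) :=
    fun T i => prod_nonneg fun j _ => by have := hP1' j i; linarith
  have hprod1 : ∀ (T : Finset (Fin m)) i, ∏ j ∈ T, (1 - P j i) ≤ 1 := by
    intro T i
    apply Finset.prod_le_one
    · intro j _; have := hP1' j i; linarith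
    · intro j _; have := hP0 j i; linarith
  have hprodPν : ∀ i, ∏ j ∈ A, (1 - P j i) ≤ ∏ j ∈ A, (1 - ν j i) := by
    intro i
    apply Finset.prod_le_prod
    · intro j _; have := hP1' j i; linarith
    · intro j _; have := hνP j i; linarith
  -- per-bin lower bounds
  have hlow : ∀ i, 1 ≤ S i → (1:ℝ)/2 ≤ 1 - ∏ j ∈ A, (1 - P j i) := by
    intro i hSi
    have hSpos : (0:ℝ) < S i := lt_of_lt_of_le one_pos hSi
    have h1 : ∏ j ∈ A, (1 - ν j i) ≤ ∏ j ∈ A, (1 - ν j i / S i) := by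
      apply Finset.prod_le_prod
      · intro j _; have := hν1 j i; linarith
      · intro j _
        have := div_le_self (hν0 j i) hSi
        linarith
    have h2 := quad_bound A (fun j => ν j i / S i)
      (fun j _ => div_nonneg (hν0 j i) hSpos.le)
      (fun j _ => (div_le_one hSpos).2 (le_trans (hν1 j i) hSi))
    have hsum : ∑ j ∈ A, ν j i / S i = 1 := by
      rw [← Finset.sum_div]
      exact div_self hSpos.ne'
    rw [hsum] at h2
    have h3 := hprodPν i
    norm_num at h2
    linarith
  have hlight : ∀ i, S i ≤ 2 → S i / 4 ≤ 1 - ∏ j ∈ A, (1 - P j i) := by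
    intro i hSi
    have h1 : ∏ j ∈ A, (1 - ν j i) ≤ ∏ j ∈ A, (1 - ν j i / 2) := by
      apply Finset.prod_le_prod
      · intro j _; have := hν1 j i; linarith
      · intro j _; have := hν0 j i; linarith
    have h2 := quad_bound A (fun j => ν j i / 2)
      (fun j _ => div_nonneg (hν0 j i) (by norm_num))
      (fun j _ => by have := hν1 j i; linarith)
    have hsum : ∑ j ∈ A, ν j i / 2 = S i / 2 := by
      rw [← Finset.sum_div]
    rw [hsum] at h2
    have h3 := hprodPν i
    have h0 := hS0 i
    nlinarith [mul_nonneg h0 (by linarith : (0:ℝ) ≤ 2 - S i)]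
  -- light / heavy bins
  set L : Finset (Fin n) := univ.filter (fun i => (a:ℝ) * μ i < 2) with hL_def
  set W : ℝ := ∑ i ∈ L, μ i with hW_def
  -- the key bound on the coalescence count
  have key : (m:ℝ)^2/(256*n) ≤ ∑ k ∈ Aᶜ, ∑ i, P k i * (1 - ∏ j ∈ A, (1 - P j i)) := by
    by_cases hW9 : (9:ℝ)/16 ≤ W
    · -- light case
      have hq : ∀ k : Fin m,
          25*(a:ℝ)/(1024*n) ≤ ∑ i, P k i * (1 - ∏ j ∈ A, (1 - P j i)) := by
        intro k
        have step1 : ∑ i ∈ L, ν k i * (S i / 4)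
            ≤ ∑ i, P k i * (1 - ∏ j ∈ A, (1 - P j i)) := by
          calc ∑ i ∈ L, ν k i * (S i / 4)
              ≤ ∑ i ∈ L, P k i * (1 - ∏ j ∈ A, (1 - P j i)) := by
                apply Finset.sum_le_sum
                intro i hi
                have hiL : (a:ℝ) * μ i < 2 := by
                  rw [hL_def] at hi
                  exact (Finset.mem_filter.1 hi).2
                have hS2 : S i ≤ 2 := le_trans (hSle i) hiL.le
                have h4 := hlight i hS2
                have h5 : 0 ≤ S i / 4 := by have := hS0 i; linarith
                exact mul_le_mul (hνP k i) h4 h5 (hP0 k i)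
            _ ≤ ∑ i, P k i * (1 - ∏ j ∈ A, (1 - P j i)) :=
                Finset.sum_le_sum_of_subset_of_nonneg (subset_univ L)
                  (fun i _ _ => mul_nonneg (hP0 k i) (by have := hprod1 A i; linarith))
        have swap : ∑ i ∈ L, ν k i * (S i / 4)
            = (∑ j ∈ A, ∑ i ∈ L, ν k i * ν j i) / 4 := by
          have e1 : ∀ i ∈ L, ν k i * (S i / 4) = (∑ j ∈ A, ν k i * ν j i)/4 := by
            intro i _
            rw [← Finset.mul_sum]
            simp only [hS_def]
            ring
          rw [Finset.sum_congr rfl e1, ← Finset.sum_div, Finset.sum_comm]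
        have hj : ∀ j ∈ A, (5/16:ℝ)^2/n ≤ ∑ i ∈ L, ν k i * ν j i := by
          intro j _
          have hmin : ∀ i, min (ν k i) (ν j i) ^ 2 ≤ ν k i * ν j i := by
            intro i
            have h0 : 0 ≤ min (ν k i) (ν j i) := le_min (hν0 k i) (hν0 j i)
            have := mul_le_mul (min_le_left (ν k i) (ν j i))
              (min_le_right (ν k i) (ν j i)) h0 (hν0 k i)
            nlinarith
          have hsummin : (5/16:ℝ) ≤ ∑ i ∈ L, min (ν k i) (ν j i) := by
            have hlo : ∀ i ∈ L, μ i - (μ i - ν k i) - (μ i - ν j i)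
                ≤ min (ν k i) (ν j i) := by
              intro i _
              apply le_min
              · have := hνμ j i; linarith
              · have := hνμ k i; linarith
            have h1 := hdsub L k
            have h2 := hdsub L j
            have h3 : ∑ i ∈ L, (μ i - (μ i - ν k i) - (μ i - ν j i))
                = W - (∑ i ∈ L, (μ i - ν k i)) - ∑ i ∈ L, (μ i - ν j i) := by
              rw [hW_def, Finset.sum_sub_distrib, Finset.sum_sub_distrib]
            have h4 := Finset.sum_le_sum hlo
            rw [h3] at h4
            linarith
          have hCS := sq_sum_le_card_mul_sum_sq (s := L)
            (f := fun i => min (ν k i) (ν j i))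
          have hc : ((L.card : ℕ):ℝ) ≤ n := by
            have : L.card ≤ n := le_trans (Finset.card_le_card (subset_univ L)) (by simp)
            exact_mod_cast this
          have hsq : ∑ i ∈ L, min (ν k i) (ν j i) ^ 2 ≤ ∑ i ∈ L, ν k i * ν j i :=
            Finset.sum_le_sum fun i _ => hmin i
          have hsqnn : 0 ≤ ∑ i ∈ L, min (ν k i) (ν j i) ^ 2 :=
            sum_nonneg fun i _ => sq_nonneg _
          have h5 : (5/16:ℝ)^2 ≤ (∑ i ∈ L, min (ν k i) (ν j i))^2 :=
            pow_le_pow_left₀ (by norm_num) hsummin 2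
          have h6 : ((L.card : ℕ):ℝ) * (∑ i ∈ L, min (ν k i) (ν j i) ^ 2)
              ≤ (n:ℝ) * ∑ i ∈ L, ν k i * ν j i :=
            mul_le_mul hc hsq hsqnn hnR.le
          rw [div_le_iff₀ hnR]
          nlinarith [hCS]
        have hA' : (a:ℝ) * ((5/16:ℝ)^2/n) ≤ ∑ j ∈ A, ∑ i ∈ L, ν k i * ν j i := by
          have := Finset.card_nsmul_le_sum A _ _ hj
          rwa [hA, nsmul_eq_mul] at this
        have heq : (a:ℝ) * ((5/16:ℝ)^2/n) / 4 = 25*(a:ℝ)/(1024*n) := by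
          field_simp
          ring
        rw [swap] at step1
        linarith
      have hsumB : ((m:ℝ) - a) * (25*(a:ℝ)/(1024*n))
          ≤ ∑ k ∈ Aᶜ, ∑ i, P k i * (1 - ∏ j ∈ A, (1 - P j i)) := by
        have := Finset.card_nsmul_le_sum Aᶜ _ _ (fun k _ => hq k)
        rwa [hBcard, nsmul_eq_mul, Nat.cast_sub ham] at this
      have hab : 3*m^2 ≤ 16*(a*(m-a)) := by
        obtain ⟨t, ht | ht⟩ := Nat.even_or_odd' m
        · have hat : a = t := by omega
          have ht1 : 1 ≤ t := by omega
          subst ht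
          rw [hat]
          have : 2*t - t = t := by omega
          rw [this]
          nlinarith
        · have hat : a = t + 1 := by omega
          have ht1 : 1 ≤ t := by omega
          subst ht
          rw [hat]
          have : 2*t + 1 - (t+1) = t := by omega
          rw [this]
          nlinarith
      have habR : 3*(m:ℝ)^2 ≤ 16*((a:ℝ)*((m:ℝ)-(a:ℝ))) := by
        have h := hab
        have : ((3*m^2 : ℕ):ℝ) ≤ ((16*(a*(m-a)) : ℕ):ℝ) := by exact_mod_cast h
        push_cast [Nat.cast_sub ham] at this
        linarith
      calc (m:ℝ)^2/(256*n) ≤ ((m:ℝ) - a) * (25*(a:ℝ)/(1024*n)) := by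
            have heq1 : ((m:ℝ) - a) * (25*(a:ℝ)/(1024*n))
                = (25*((a:ℝ)*((m:ℝ)-a)))/(1024*n) := by ring
            have heq2 : (m:ℝ)^2/(256*n) = (4*(m:ℝ)^2)/(1024*n) := by
              rw [div_eq_div_iff (by positivity) (by positivity)]
              ring
            have hstep : 4*(m:ℝ)^2 ≤ 25*((a:ℝ)*((m:ℝ)-a)) := by
              linarith [habR, sq_nonneg (m:ℝ)]
            rw [heq1, heq2]
            exact (div_le_div_iff_of_pos_right (by positivity)).2 hstep
        _ ≤ _ := hsumB
    · -- heavy case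
      push_neg at hW9
      set H : Finset (Fin n) := univ.filter (fun i => ¬ ((a:ℝ) * μ i < 2)) with hH_def
      set G : Finset (Fin n) := H.filter (fun i => D i ≤ (a:ℝ) * μ i / 2) with hG_def
      set Bad : Finset (Fin n) := H.filter (fun i => ¬ (D i ≤ (a:ℝ) * μ i / 2)) with hBad_def
      have hLH : W + ∑ i ∈ H, μ i = 1 := by
        rw [hW_def, hL_def, hH_def, Finset.sum_filter_add_sum_filter_not, hμ1]
      have hGB : ∑ i ∈ G, μ i + ∑ i ∈ Bad, μ i = ∑ i ∈ H, μ i := by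
        rw [hG_def, hBad_def, Finset.sum_filter_add_sum_filter_not]
      have hBadle : ∑ i ∈ Bad, μ i ≤ 1/4 := by
        have h1 : ∀ i ∈ Bad, μ i ≤ 2/(a:ℝ) * D i := by
          intro i hi
          rw [hBad_def, hH_def] at hi
          simp only [Finset.mem_filter, Finset.mem_univ, true_and, not_lt, not_le] at hi
          obtain ⟨h2, h3⟩ := hi
          have h4 : μ i ≤ (2 * D i)/(a:ℝ) := by
            rw [le_div_iff₀ haP]
            nlinarith [h3]
          calc μ i ≤ (2 * D i)/(a:ℝ) := h4
            _ = 2/(a:ℝ) * D i := by ring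
        calc ∑ i ∈ Bad, μ i ≤ ∑ i ∈ Bad, 2/(a:ℝ) * D i := Finset.sum_le_sum h1
          _ = 2/(a:ℝ) * ∑ i ∈ Bad, D i := by rw [Finset.mul_sum]
          _ ≤ 2/(a:ℝ) * ((a:ℝ)/8) := by
              apply mul_le_mul_of_nonneg_left ?_ (by positivity)
              calc ∑ i ∈ Bad, D i ≤ ∑ i, D i :=
                    Finset.sum_le_sum_of_subset_of_nonneg (subset_univ _)
                      (fun i _ _ => hD0 i)
                _ ≤ (a:ℝ)/8 := hDsum
          _ = 1/4 := by field_simp; ring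
      have hGmass : 3/16 ≤ ∑ i ∈ G, μ i := by linarith
      have hq : ∀ k : Fin m,
          (1:ℝ)/32 ≤ ∑ i, P k i * (1 - ∏ j ∈ A, (1 - P j i)) := by
        intro k
        have step : ∑ i ∈ G, ν k i * (1/2)
            ≤ ∑ i, P k i * (1 - ∏ j ∈ A, (1 - P j i)) := by
          calc ∑ i ∈ G, ν k i * (1/2)
              ≤ ∑ i ∈ G, P k i * (1 - ∏ j ∈ A, (1 - P j i)) := by
                apply Finset.sum_le_sum
                intro i hi
                rw [hG_def, hH_def] at hi
                simp only [Finset.mem_filter, Finset.mem_univ, true_and, not_lt] at hi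
                obtain ⟨h2, h3⟩ := hi
                have hS1 : 1 ≤ S i := by rw [hSD i]; linarith
                have h4 := hlow i hS1
                exact mul_le_mul (hνP k i) (by linarith) (by norm_num) (hP0 k i)
            _ ≤ ∑ i, P k i * (1 - ∏ j ∈ A, (1 - P j i)) :=
                Finset.sum_le_sum_of_subset_of_nonneg (subset_univ G)
                  (fun i _ _ => mul_nonneg (hP0 k i) (by have := hprod1 A i; linarith))
        have mass : 3/16 - 1/8 ≤ ∑ i ∈ G, ν k i := by
          have h1 := hdsub G k
          have h2 : ∑ i ∈ G, (μ i - ν k i) = ∑ i ∈ G, μ i - ∑ i ∈ G, ν k i := by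
            rw [Finset.sum_sub_distrib]
          linarith
        have h3 : ∑ i ∈ G, ν k i * (1/2) = (∑ i ∈ G, ν k i)/2 := by
          rw [← Finset.sum_mul]
          ring
        rw [h3] at step
        linarith
      have hsumB : ((m:ℝ) - a) * ((1:ℝ)/32)
          ≤ ∑ k ∈ Aᶜ, ∑ i, P k i * (1 - ∏ j ∈ A, (1 - P j i)) := by
        have := Finset.card_nsmul_le_sum Aᶜ _ _ (fun k _ => hq k)
        rwa [hBcard, nsmul_eq_mul, Nat.cast_sub ham] at this
      have hb3 : m ≤ 3 * (m - a) := by omega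
      have hb3R : (m:ℝ) ≤ 3*((m:ℝ) - a) := by
        have : ((m:ℕ):ℝ) ≤ ((3*(m-a) : ℕ):ℝ) := by exact_mod_cast hb3
        push_cast [Nat.cast_sub ham] at this
        linarith
      calc (m:ℝ)^2/(256*n) ≤ ((m:ℝ) - a) * ((1:ℝ)/32) := by
            rw [div_le_iff₀ (by positivity)]
            have hx1 := mul_le_mul_of_nonneg_right hmnR (by linarith : (0:ℝ) ≤ (m:ℝ))
            have hx2 := mul_le_mul_of_nonneg_left hb3R hnR.le
            nlinarith [hx1, hx2, sq_nonneg (m:ℝ)]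
        _ ≤ _ := hsumB
  -- the decomposition: expected nonempty ≤ m - coalescences
  have decomp : ∑ i, (1 - ∏ j, (1 - P j i))
      ≤ (m:ℝ) - ∑ k ∈ Aᶜ, ∑ i, P k i * (1 - ∏ j ∈ A, (1 - P j i)) := by
    have hpt : ∀ i, 1 - ∏ j, (1 - P j i)
        ≤ (∑ j, P j i) - ∑ k ∈ Aᶜ, P k i * (1 - ∏ j ∈ A, (1 - P j i)) := by
      intro i
      have hA1 : 1 - ∑ j ∈ A, P j i ≤ ∏ j ∈ A, (1 - P j i) :=
        weier A _ (fun j _ => hP0 j i) (fun j _ => hP1' j i)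
      have hB1 : 1 - ∑ j ∈ Aᶜ, P j i ≤ ∏ j ∈ Aᶜ, (1 - P j i) :=
        weier Aᶜ _ (fun j _ => hP0 j i) (fun j _ => hP1' j i)
      have hA0 : 0 ≤ ∏ j ∈ A, (1 - P j i) := hprod0 A i
      have hprod_split : (∏ j ∈ A, (1 - P j i)) * ∏ j ∈ Aᶜ, (1 - P j i)
          = ∏ j, (1 - P j i) := Finset.prod_mul_prod_compl A _
      have hsum_split : (∑ j ∈ A, P j i) + ∑ j ∈ Aᶜ, P j i = ∑ j, P j i :=
        Finset.sum_add_sum_compl A _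
      have hsumB' : ∑ k ∈ Aᶜ, P k i * (1 - ∏ j ∈ A, (1 - P j i))
          = (∑ k ∈ Aᶜ, P k i) * (1 - ∏ j ∈ A, (1 - P j i)) := by
        rw [Finset.sum_mul]
      have hkey := mul_le_mul_of_nonneg_left hB1 hA0
      rw [hsumB', ← hprod_split, ← hsum_split]
      nlinarith
    calc ∑ i, (1 - ∏ j, (1 - P j i))
        ≤ ∑ i, ((∑ j, P j i) - ∑ k ∈ Aᶜ, P k i * (1 - ∏ j ∈ A, (1 - P j i))) :=
          Finset.sum_le_sum fun i _ => hpt i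
      _ = (m:ℝ) - ∑ k ∈ Aᶜ, ∑ i, P k i * (1 - ∏ j ∈ A, (1 - P j i)) := by
          rw [Finset.sum_sub_distrib]
          congr 1
          · rw [Finset.sum_comm]
            calc ∑ j : Fin m, ∑ i : Fin n, P j i = ∑ j : Fin m, (1:ℝ) :=
                  Finset.sum_congr rfl (fun j _ => hP1 j)
              _ = m := by
                  rw [Finset.sum_const, Finset.card_univ, Fintype.card_fin, nsmul_eq_mul, mul_one]
          · rw [Finset.sum_comm]
  have hcast : ((m:ℝ))^2/(256*(n:ℝ)) = (m:ℝ)^2/(256*n) := rfl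
  linarith [key, decomp]
end

section
/- Suppose a set M of balls are thrown independently into n bins, ball j landing in bin i with probability P_j(i), and then one additional ball is thrown with distribution Q satisfying TV(P_j, Q) ≤ 1/4 for all j ∈ M. Let S = {i : Σ_{j∈M} P_j(i) ≤ 1}, and suppose Q(S) ≥ 1/2. Then the probability that the additional ball lands in a nonempty bin is at least |M|/(32n). -/
open Finset

/-- `m` balls are thrown independently into `n` bins (ball `j` landing in bin `i`
with probability `P j i`), and then an additional ball is thrown with
distribution `Q` satisfying `TV(P j, Q) ≤ 1/4` for all `j`.  The probability
that the additional ball lands in a nonempty bin is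
`∑ i, Q i * (1 - ∏ j, (1 - P j i))`.  If `S = {i : ∑ j, P j i ≤ 1}` has
`Q(S) ≥ 1/2`, then this probability is at least `m / (32 n)`. -/
theorem stmt_9 (n m : ℕ) (hn : 0 < n)
    (P : Fin m → Fin n → ℝ) (Q : Fin n → ℝ)
    (hP0 : ∀ j i, 0 ≤ P j i) (hP1 : ∀ j, ∑ i, P j i = 1)
    (hQ0 : ∀ i, 0 ≤ Q i) (hQ1 : ∑ i, Q i = 1)
    (hTV : ∀ j, (1 / 2) * ∑ i, |P j i - Q i| ≤ 1 / 4)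
    (S : Finset (Fin n)) (hS : S = Finset.univ.filter (fun i => ∑ j, P j i ≤ 1))
    (hQS : (1 : ℝ) / 2 ≤ ∑ i ∈ S, Q i) :
    (m : ℝ) / (32 * n) ≤ ∑ i, Q i * (1 - ∏ j, (1 - P j i)) := by
  have hn' : (0:ℝ) < n := by exact_mod_cast hn
  -- each P j i ≤ 1
  have hPle1 : ∀ j i, P j i ≤ 1 := by
    intro j i
    calc P j i ≤ ∑ i, P j i := Finset.single_le_sum (fun i _ => hP0 j i) (mem_univ i)
    _ = 1 := hP1 j
  -- total-variation identity: sum of mins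
  have hminS : ∀ j, (1:ℝ)/4 ≤ ∑ i ∈ S, min (P j i) (Q i) := by
    intro j
    have key : ∀ i, min (P j i) (Q i) = (P j i + Q i - |P j i - Q i|) / 2 := by
      intro i
      rcases le_total (P j i) (Q i) with h | h
      · rw [min_eq_left h, abs_of_nonpos (by linarith)]; ring
      · rw [min_eq_right h, abs_of_nonneg (by linarith)]; ring
    have h1 : ∑ i, min (P j i) (Q i) = ((∑ i, P j i) + (∑ i, Q i) - ∑ i, |P j i - Q i|) / 2 := by
      rw [Finset.sum_congr rfl fun i _ => key i, ← Finset.sum_div,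
        Finset.sum_sub_distrib, Finset.sum_add_distrib]
    have h2 : (3:ℝ)/4 ≤ ∑ i, min (P j i) (Q i) := by
      have := hTV j
      rw [h1, hP1 j, hQ1]; linarith
    have hsplit : ∑ i ∈ S, min (P j i) (Q i) + ∑ i ∈ univ \ S, min (P j i) (Q i)
        = ∑ i, min (P j i) (Q i) := by
      rw [add_comm]
      exact Finset.sum_sdiff (Finset.subset_univ S)
    have hQsplit : ∑ i ∈ S, Q i + ∑ i ∈ univ \ S, Q i = ∑ i, Q i := by
      rw [add_comm]
      exact Finset.sum_sdiff (Finset.subset_univ S)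
    have hminQ : ∑ i ∈ univ \ S, min (P j i) (Q i) ≤ ∑ i ∈ univ \ S, Q i :=
      Finset.sum_le_sum fun i _ => min_le_right _ _
    rw [hQ1] at hQsplit
    linarith
  -- Cauchy-Schwarz type step
  have hcard : (S.card : ℝ) ≤ n := by
    have : S.card ≤ n := by
      calc S.card ≤ (univ : Finset (Fin n)).card := Finset.card_le_card (Finset.subset_univ S)
      _ = n := by simp
    exact_mod_cast this
  have hQP : ∀ j, 1/(16*(n:ℝ)) ≤ ∑ i ∈ S, Q i * P j i := by
    intro j
    have h1 : (∑ i ∈ S, min (P j i) (Q i))^2 ≤ S.card * ∑ i ∈ S, (min (P j i) (Q i))^2 :=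
      sq_sum_le_card_mul_sum_sq
    have h2 : ∑ i ∈ S, (min (P j i) (Q i))^2 ≤ ∑ i ∈ S, Q i * P j i := by
      refine Finset.sum_le_sum fun i _ => ?_
      have hp := hP0 j i; have hq := hQ0 i
      rcases le_total (P j i) (Q i) with h | h
      · rw [min_eq_left h]; nlinarith
      · rw [min_eq_right h]; nlinarith
    have h3 := hminS j
    have hnn : 0 ≤ ∑ i ∈ S, (min (P j i) (Q i))^2 := Finset.sum_nonneg fun i _ => sq_nonneg _
    rw [div_le_iff₀ (by positivity)]
    nlinarith
  -- product bound on S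
  have hprod : ∀ i ∈ S, (∑ j, P j i)/2 ≤ 1 - ∏ j, (1 - P j i) := by
    intro i hi
    have hs1 : ∑ j, P j i ≤ 1 := by
      rw [hS] at hi; exact (Finset.mem_filter.mp hi).2
    have hs0 : 0 ≤ ∑ j, P j i := Finset.sum_nonneg fun j _ => hP0 j i
    have h1 : ∏ j, (1 - P j i) ≤ Real.exp (-(∑ j, P j i)) := by
      have : ∏ j, (1 - P j i) ≤ ∏ j, Real.exp (-(P j i)) := by
        refine Finset.prod_le_prod (fun j _ => by linarith [hPle1 j i]) fun j _ => ?_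
        linarith [Real.add_one_le_exp (-(P j i))]
      calc ∏ j, (1 - P j i) ≤ ∏ j, Real.exp (-(P j i)) := this
      _ = Real.exp (∑ j, -(P j i)) := (Real.exp_sum _ _).symm
      _ = Real.exp (-(∑ j, P j i)) := by rw [Finset.sum_neg_distrib]
    have h2 : Real.exp (-(∑ j, P j i)) ≤ 1 - (∑ j, P j i)/2 := by
      set s := ∑ j, P j i
      have hE : Real.exp (-s) * Real.exp s = 1 := by
        rw [← Real.exp_add]; simp
      nlinarith [Real.add_one_le_exp s, (Real.exp_pos (-s)).le, (Real.exp_pos s).le]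
    linarith
  -- assemble
  have hstep1 : ∑ i ∈ S, Q i * (1 - ∏ j, (1 - P j i)) ≤ ∑ i, Q i * (1 - ∏ j, (1 - P j i)) := by
    refine Finset.sum_le_sum_of_subset_of_nonneg (Finset.subset_univ S) fun i _ _ => ?_
    have hp : ∏ j, (1 - P j i) ≤ 1 := by
      apply Finset.prod_le_one
      · intro j _; linarith [hPle1 j i]
      · intro j _; linarith [hP0 j i]
    exact mul_nonneg (hQ0 i) (by linarith)
  have hstep2 : ∑ i ∈ S, Q i * ((∑ j, P j i)/2) ≤ ∑ i ∈ S, Q i * (1 - ∏ j, (1 - P j i)) := by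
    refine Finset.sum_le_sum fun i hi => ?_
    exact mul_le_mul_of_nonneg_left (hprod i hi) (hQ0 i)
  have hswap : ∑ i ∈ S, Q i * ((∑ j, P j i)/2) = (1/2) * ∑ j, ∑ i ∈ S, Q i * P j i := by
    simp only [Finset.sum_div, Finset.mul_sum]
    rw [Finset.sum_comm]
    exact Finset.sum_congr rfl fun j _ => Finset.sum_congr rfl fun i _ => by ring
  have hstep3 : (m:ℝ) * (1/(16*(n:ℝ))) ≤ ∑ j, ∑ i ∈ S, Q i * P j i := by
    calc (m:ℝ) * (1/(16*(n:ℝ))) = ∑ _j : Fin m, 1/(16*(n:ℝ)) := by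
          simp [Finset.sum_const, Fintype.card_fin, mul_comm]
    _ ≤ ∑ j, ∑ i ∈ S, Q i * P j i := Finset.sum_le_sum fun j _ => hQP j
  have : (m:ℝ) / (32 * n) = (1/2) * ((m:ℝ) * (1/(16*(n:ℝ)))) := by
    ring
  rw [this]
  calc (1/2) * ((m:ℝ) * (1/(16*(n:ℝ)))) ≤ (1/2) * ∑ j, ∑ i ∈ S, Q i * P j i := by linarith
  _ = ∑ i ∈ S, Q i * ((∑ j, P j i)/2) := hswap.symm
  _ ≤ ∑ i ∈ S, Q i * (1 - ∏ j, (1 - P j i)) := hstep2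
  _ ≤ _ := hstep1
end

section
/- Suppose a set M of balls are thrown independently into n bins, ball j landing in bin i with probability P_j(i), and then one additional ball is thrown with distribution Q. Let S = {i : Σ_{j∈M} P_j(i) ≤ 1}. If Q(S) < 1/2, then the probability that the additional ball lands in a nonempty bin is at least 1/4. -/
open Finset

/-- As in `stmt_9`, but if `Q(S) < 1/2` where `S = {i : ∑ j, P j i ≤ 1}`, then
the probability `∑ i, Q i * (1 - ∏ j, (1 - P j i))` that the additional ball
lands in a nonempty bin is at least `1/4`. -/
theorem stmt_10 (n m : ℕ)
    (P : Fin m → Fin n → ℝ) (Q : Fin n → ℝ)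
    (hP0 : ∀ j i, 0 ≤ P j i) (hP1 : ∀ j, ∑ i, P j i = 1)
    (hQ0 : ∀ i, 0 ≤ Q i) (hQ1 : ∑ i, Q i = 1)
    (S : Finset (Fin n)) (hS : S = Finset.univ.filter (fun i => ∑ j, P j i ≤ 1))
    (hQS : ∑ i ∈ S, Q i < (1 : ℝ) / 2) :
    (1 : ℝ) / 4 ≤ ∑ i, Q i * (1 - ∏ j, (1 - P j i)) := by
  have hPle1 : ∀ j i, P j i ≤ 1 := by
    intro j i
    calc P j i ≤ ∑ i, P j i := Finset.single_le_sum (fun k _ => hP0 j k) (mem_univ i)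
    _ = 1 := hP1 j
  have hfac : ∀ i, 0 ≤ 1 - ∏ j, (1 - P j i) := by
    intro i
    have : ∏ j, (1 - P j i) ≤ 1 := by
      apply Finset.prod_le_one (fun j _ => by linarith [hPle1 j i])
      intro j _; linarith [hP0 j i]
    linarith
  -- For i ∉ S, the product is at most exp(-1) ≤ 1/2
  have key : ∀ i ∉ S, (1:ℝ)/2 ≤ 1 - ∏ j, (1 - P j i) := by
    intro i hi
    rw [hS, mem_filter] at hi
    push_neg at hi
    have hsum : 1 < ∑ j, P j i := hi (mem_univ i)
    have h1 : ∏ j, (1 - P j i) ≤ ∏ j, Real.exp (-(P j i)) := by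
      apply Finset.prod_le_prod (fun j _ => by linarith [hPle1 j i])
      intro j _
      have := Real.add_one_le_exp (-(P j i))
      linarith
    have h2 : ∏ j, Real.exp (-(P j i)) = Real.exp (-(∑ j, P j i)) := by
      rw [← Real.exp_sum]; congr 1; rw [Finset.sum_neg_distrib]
    have h3 : Real.exp (-(∑ j, P j i)) ≤ Real.exp (-1) :=
      Real.exp_le_exp.mpr (by linarith)
    have h4 : Real.exp (-1 : ℝ) ≤ 1/2 := by
      rw [Real.exp_neg]
      have : (2:ℝ) ≤ Real.exp 1 := by linarith [Real.add_one_le_exp (1:ℝ)]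
      rw [inv_le_comm₀ (by positivity) (by norm_num)]
      simpa using this
    linarith
  have hsplit : ∑ i, Q i * (1 - ∏ j, (1 - P j i))
      = ∑ i ∈ S, Q i * (1 - ∏ j, (1 - P j i))
        + ∑ i ∈ Sᶜ, Q i * (1 - ∏ j, (1 - P j i)) := by
    rw [Finset.sum_add_sum_compl]
  have h1 : 0 ≤ ∑ i ∈ S, Q i * (1 - ∏ j, (1 - P j i)) :=
    Finset.sum_nonneg fun i _ => mul_nonneg (hQ0 i) (hfac i)
  have h2 : ∑ i ∈ Sᶜ, Q i * (1/2) ≤ ∑ i ∈ Sᶜ, Q i * (1 - ∏ j, (1 - P j i)) := by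
    apply Finset.sum_le_sum
    intro i hi
    exact mul_le_mul_of_nonneg_left (key i (mem_compl.mp hi)) (hQ0 i)
  have h3 : ∑ i ∈ Sᶜ, Q i = 1 - ∑ i ∈ S, Q i := by
    have := Finset.sum_add_sum_compl S Q
    linarith [this.symm ▸ hQ1]
  have h4 : (1:ℝ)/2 < ∑ i ∈ Sᶜ, Q i := by rw [h3]; linarith
  have h5 : ∑ i ∈ Sᶜ, Q i * (1/2) = (∑ i ∈ Sᶜ, Q i) * (1/2) := by
    rw [Finset.sum_mul]
  nlinarith
end
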